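/- (Quasi-isomorphisms of ħ-series complexes.) Let n and m be integers, let (C, (d_i)) and (D, (∂_i)) be ħ-series data satisfying the convolution relations ∑_{a+b=i} d_a d_b = 0 and ∑_{a+b=i} ∂_a ∂_b = 0 for all i ≥ 0, with associated ħ-series complexes (̃C, d) and (̃D, ∂), and let F = ∑_{i≥0} F_i ħ^i be an ħ-series map of degree m that is a chain map, F ∘ d = ∂ ∘ F. If F_0 : (C, d_0) → (D, ∂_0) is a quasi-isomorphism (it induces an isomorphism on cohomology in every degree), then F is a quasi-isomorphism as well: the induced map H^k(̃C, d) → H^{k+m}(̃D, ∂) is an isomorphism for every integer k. -/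

import Mathlib

/-!
Both complexes are modelled inside the products `∏ₖ Cᵏ` and `∏ₖ Dᵏ`, graded by the images of the
`Cᵏ`; ħ-series become sequences there and `∑ F_i ħ^i` acts on them by convolution.
`F` is a quasi-isomorphism as soon as its mapping cone is acyclic. The cone of `F` is again an
ħ-series complex, and its `ħ⁰`-part is the cone of `F₀`, acyclic because `F₀` is a
quasi-isomorphism. Finally an ħ-series complex with acyclic `ħ⁰`-part is acyclic: a cycle is
integrated one coefficient at a time, the defect at each stage being a `d₀`-cycle because `d² = 0`;
since the complex consists of all formal series, this recursion never has to stop.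
-/

open Finset

/-- Transport an element along an equality of degrees. -/
def degTr (C : ℤ → Type) [∀ k, AddCommGroup (C k)] [∀ k, Module ℚ (C k)]
    {k k' : ℤ} (h : k = k') : C k →ₗ[ℚ] C k' := by
  subst h; exact LinearMap.id

/-- The degree-`m` piece of the ħ-series complex: formal series `∑_{j ≥ 0} c_j ħ^j`
with `c_j ∈ C^{m + (n-2)j}` (here `|ħ| = 2 - n`). -/
def TildeC (n : ℤ) (C : ℤ → Type) (m : ℤ) : Type :=
  ∀ j : ℕ, C (m + (n - 2) * j)

instance (n : ℤ) (C : ℤ → Type) [∀ k, AddCommGroup (C k)] (m : ℤ) :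
    AddCommGroup (TildeC n C m) :=
  inferInstanceAs (AddCommGroup (∀ j : ℕ, C (m + (n - 2) * j)))

instance (n : ℤ) (C : ℤ → Type) [∀ k, AddCommGroup (C k)] [∀ k, Module ℚ (C k)] (m : ℤ) :
    Module ℚ (TildeC n C m) :=
  inferInstanceAs (Module ℚ (∀ j : ℕ, C (m + (n - 2) * j)))

/-- The degree-one map `d = d₀ + d₁ħ + d₂ħ² + ⋯` of the ħ-series complex:
`d(∑ c_j ħ^j) = ∑ (∑_{a+b=j} d_a(c_b)) ħ^j`. -/
def seriesD (n : ℤ) (C : ℤ → Type) [∀ k, AddCommGroup (C k)] [∀ k, Module ℚ (C k)]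
    (d : ∀ (i : ℕ) (k : ℤ), C k →ₗ[ℚ] C (k + 1 + (n - 2) * i))
    (m : ℤ) (v : TildeC n C m) : TildeC n C (m + 1) :=
  fun j =>
    ∑ p ∈ (antidiagonal j).attach,
      degTr C
        (by
          have h : ((p.1.1 : ℤ) + (p.1.2 : ℤ)) = (j : ℤ) := by
            exact_mod_cast mem_antidiagonal.mp p.2
          linear_combination (n - 2) * h)
        (d p.1.1 (m + (n - 2) * p.1.2) (v p.1.2))

/-- The convolution relations `∑_{a+b=i} d_a ∘ d_b = 0` (as maps `C → C`),
beginning with `d₀² = 0`, `d₁d₀ + d₀d₁ = 0`, …. -/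
def convRel (n : ℤ) (C : ℤ → Type) [∀ k, AddCommGroup (C k)] [∀ k, Module ℚ (C k)]
    (d : ∀ (i : ℕ) (k : ℤ), C k →ₗ[ℚ] C (k + 1 + (n - 2) * i)) : Prop :=
  ∀ (i : ℕ) (k : ℤ) (x : C k),
    (∑ p ∈ (antidiagonal i).attach,
        degTr C
          (by
            have h : ((p.1.1 : ℤ) + (p.1.2 : ℤ)) = (i : ℤ) := by
              exact_mod_cast mem_antidiagonal.mp p.2
            linear_combination (n - 2) * h)
          (d p.1.1 (k + 1 + (n - 2) * p.1.2) (d p.1.2 k x))) =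
      (0 : C (k + 2 + (n - 2) * i))

/-- Transport of series along an equality of degrees. -/
def tildeTr (n : ℤ) (C : ℤ → Type) [∀ k, AddCommGroup (C k)] [∀ k, Module ℚ (C k)]
    {m m' : ℤ} (h : m = m') (v : TildeC n C m) : TildeC n C m' :=
  fun j => degTr C (by rw [h]) (v j)

/-- A degree-`m` ħ-series map `F = ∑_{i≥0} F_i ħ^i` between ħ-series complexes:
`F(∑ c_j ħ^j) = ∑ (∑_{a+b=j} F_a(c_b)) ħ^j`. -/
def seriesMapDeg (n m : ℤ) (C D : ℤ → Type)
    [∀ k, AddCommGroup (C k)] [∀ k, Module ℚ (C k)]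
    [∀ k, AddCommGroup (D k)] [∀ k, Module ℚ (D k)]
    (F : ∀ (i : ℕ) (k : ℤ), C k →ₗ[ℚ] D (k + m + (n - 2) * i))
    (k : ℤ) (v : TildeC n C k) : TildeC n D (k + m) :=
  fun j =>
    ∑ p ∈ (antidiagonal j).attach,
      degTr D
        (by
          have h : ((p.1.1 : ℤ) + (p.1.2 : ℤ)) = (j : ℤ) := by
            exact_mod_cast mem_antidiagonal.mp p.2
          linear_combination (n - 2) * h)
        (F p.1.1 (k + (n - 2) * p.1.2) (v p.1.2))

section Series

variable {R M N P : Type*} [Ring R] [AddCommGroup M] [Module R M] [AddCommGroup N] [Module R N]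
  [AddCommGroup P] [Module R P]

/-- The ħ-series map `∑ ε_i ħ^i` acting on series `∑ u_j ħ^j`. -/
def seriesApply (ε : ℕ → M →ₗ[R] N) : (ℕ → M) →ₗ[R] ℕ → N where
  toFun u j := ∑ p ∈ antidiagonal j, ε p.1 (u p.2)
  map_add' u u' := by funext j; simp [sum_add_distrib]
  map_smul' c u := by funext j; simp [smul_sum]

lemma seriesApply_apply (ε : ℕ → M →ₗ[R] N) (u : ℕ → M) (j : ℕ) :
    seriesApply ε u j = ∑ p ∈ antidiagonal j, ε p.1 (u p.2) := rfl

lemma seriesApply_apply_of_forall_lt {ε : ℕ → M →ₗ[R] N} {u : ℕ → M} {j : ℕ}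
    (hu : ∀ i < j, u i = 0) : seriesApply ε u j = ε 0 (u j) := by
  rw [seriesApply_apply, sum_eq_single_of_mem (0, j) (by simp)]
  rintro ⟨a, b⟩ hab hne
  rw [HasAntidiagonal.mem_antidiagonal] at hab
  have hb : b < j := by
    by_contra! h
    exact hne (by rw [Prod.mk.injEq]; omega)
  rw [hu b hb, map_zero]

lemma seriesApply_apply_zero (ε : ℕ → M →ₗ[R] N) (u : ℕ → M) :
    seriesApply ε u 0 = ε 0 (u 0) :=
  seriesApply_apply_of_forall_lt (by simp)

lemma seriesApply_congr {ε : ℕ → M →ₗ[R] N} {u u' : ℕ → M} {j : ℕ}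
    (h : ∀ i ≤ j, u i = u' i) : seriesApply ε u j = seriesApply ε u' j := by
  rw [seriesApply_apply, seriesApply_apply]
  refine sum_congr rfl fun p hp => ?_
  rw [h p.2 (by rw [HasAntidiagonal.mem_antidiagonal] at hp; omega)]

lemma seriesApply_seriesApply (ε' : ℕ → N →ₗ[R] P) (ε : ℕ → M →ₗ[R] N) (u : ℕ → M) (j : ℕ) :
    seriesApply ε' (seriesApply ε u) j =
      ∑ p ∈ antidiagonal j, ∑ q ∈ antidiagonal p.1, ε' q.1 (ε q.2 (u p.2)) := by
  simp only [seriesApply_apply, map_sum, sum_sigma']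
  apply sum_nbij' (fun ⟨⟨a, _⟩, ⟨c, e⟩⟩ ↦ ⟨(a + c, e), (a, c)⟩)
    (fun ⟨⟨_, e⟩, ⟨a, c⟩⟩ ↦ ⟨(a, c + e), (c, e)⟩) <;> aesop (add simp [add_assoc])

/-- Series `∑ u_j ħ^j` of degree `k` for the grading `S`, where `|ħ| = δ`. -/
def seriesGrading (S : ℤ → Submodule R M) (δ k : ℤ) : Submodule R (ℕ → M) :=
  Submodule.pi Set.univ fun j : ℕ => S (k + δ * j)

lemma mem_seriesGrading {S : ℤ → Submodule R M} {δ k : ℤ} {u : ℕ → M} :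
    u ∈ seriesGrading S δ k ↔ ∀ j : ℕ, u j ∈ S (k + δ * j) := by
  simp [seriesGrading, Submodule.mem_pi]

lemma single_zero_mem_seriesGrading {S : ℤ → Submodule R M} {δ k : ℤ} {x : M}
    (hx : x ∈ S k) : Pi.single 0 x ∈ seriesGrading S δ k := by
  refine mem_seriesGrading.mpr fun j => ?_
  rcases eq_or_ne j 0 with rfl | hj
  · simpa using hx
  · simp [hj]

lemma seriesApply_mem_seriesGrading {S : ℤ → Submodule R M} {T : ℤ → Submodule R N}
    {δ e k : ℤ} {ε : ℕ → M →ₗ[R] N} (hε : ∀ (i : ℕ) (k : ℤ), ∀ x ∈ S k, ε i x ∈ T (k + e + δ * i))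
    {u : ℕ → M} (hu : u ∈ seriesGrading S δ k) : seriesApply ε u ∈ seriesGrading T δ (k + e) := by
  refine mem_seriesGrading.mpr fun j => ?_
  rw [seriesApply_apply]
  refine sum_mem fun p hp => ?_
  have hj : (p.1 : ℤ) + p.2 = j := by exact_mod_cast HasAntidiagonal.mem_antidiagonal.mp hp
  convert hε p.1 _ _ (mem_seriesGrading.mp hu p.2) using 2
  linear_combination -δ * hj

end Series

section Complex

variable {R M N : Type*} [Ring R] [AddCommGroup M] [Module R M] [AddCommGroup N] [Module R N]

def IsAcyclic (S : ℤ → Submodule R M) (d : M →ₗ[R] M) : Prop :=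
  ∀ k, ∀ x ∈ S (k + 1), d x = 0 → ∃ a ∈ S k, d a = x

structure IsQuasiIso (SM : ℤ → Submodule R M) (SN : ℤ → Submodule R N) (m : ℤ)
    (dM : M →ₗ[R] M) (f : M →ₗ[R] N) (dN : N →ₗ[R] N) : Prop where
  injective : ∀ k, ∀ x ∈ SM (k + 1), dM x = 0 → ∀ y ∈ SN (k + m), f x = dN y →
    ∃ z ∈ SM k, dM z = x
  surjective : ∀ k, ∀ y ∈ SN (k + 1 + m), dN y = 0 →
    ∃ x ∈ SM (k + 1), dM x = 0 ∧ ∃ z ∈ SN (k + m), f x + dN z = y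

structure IsSeriesComplex (S : ℤ → Submodule R M) (δ : ℤ) (d : ℕ → M →ₗ[R] M) : Prop where
  mapsTo : ∀ (i : ℕ) (k : ℤ), ∀ x ∈ S k, d i x ∈ S (k + 1 + δ * i)
  seriesApply_seriesApply : ∀ k, ∀ u ∈ seriesGrading S δ k, seriesApply d (seriesApply d u) = 0

end Complex

section Approximation

variable {R M : Type*} [Ring R] [AddCommGroup M] [Module R M]
  {S : ℤ → Submodule R M} {δ : ℤ} {ε : ℕ → M →ₗ[R] M}

/-- If `ε w = v` holds below `j`, the defect `v - ε w` is an `ε`-cycle vanishing below `j`,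
so its `j`-th coefficient is an `ε₀`-cycle and can be absorbed by changing `w j`. -/
lemma IsSeriesComplex.exists_next_coeff (hε : IsSeriesComplex S δ ε) (h₀ : IsAcyclic S (ε 0))
    {t : ℤ} {v : ℕ → M} (hv : v ∈ seriesGrading S δ (t + 1)) (hcyc : seriesApply ε v = 0)
    {w : ℕ → M} (hw : w ∈ seriesGrading S δ t) {j : ℕ}
    (hwv : ∀ i < j, seriesApply ε w i = v i) :
    ∃ a ∈ S (t + δ * j), ε 0 a = v j - seriesApply ε w j := by
  have hr : v - seriesApply ε w ∈ seriesGrading S δ (t + 1) :=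
    sub_mem hv (add_comm t 1 ▸ seriesApply_mem_seriesGrading hε.mapsTo hw)
  have hrcyc : ε 0 (v j - seriesApply ε w j) = 0 := by
    rw [← Pi.sub_apply, ← seriesApply_apply_of_forall_lt (u := v - seriesApply ε w)
      fun i hi => sub_eq_zero.mpr (hwv i hi).symm, map_sub, hcyc,
      hε.seriesApply_seriesApply t w hw, sub_zero, Pi.zero_apply]
  refine h₀ _ _ ?_ hrcyc
  rw [add_right_comm]
  exact mem_seriesGrading.mp hr j

theorem IsSeriesComplex.isAcyclic (hε : IsSeriesComplex S δ ε) (h₀ : IsAcyclic S (ε 0)) :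
    IsAcyclic (seriesGrading S δ) (seriesApply ε) := by
  classical
  intro t v hv hcyc
  let next (j : ℕ) (w : ℕ → M) : M :=
    if h : ∃ a ∈ S (t + δ * j), ε 0 a = v j - seriesApply ε w j then h.choose else 0
  let u : ℕ → M := Nat.strongRec (motive := fun _ => M) fun j ih =>
    next j fun i => if h : i < j then ih i h else 0
  have hu (j : ℕ) : u j = next j fun i => if i < j then u i else 0 := by
    show Nat.strongRec (motive := fun _ => M) _ j = _
    rw [Nat.strongRec_eq]
    simp only [dite_eq_ite]
    rfl
  have key : ∀ j : ℕ, u j ∈ S (t + δ * j) ∧ seriesApply ε u j = v j := by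
    intro j
    induction j using Nat.strong_induction_on with
    | _ j ih =>
      set w : ℕ → M := fun i => if i < j then u i else 0
      have hwu (i : ℕ) (hi : i < j) : w i = u i := if_pos hi
      have hw : w ∈ seriesGrading S δ t := mem_seriesGrading.mpr fun i => by
        by_cases hi : i < j
        · rw [hwu i hi]; exact (ih i hi).1
        · simp [w, hi]
      have hwv (i : ℕ) (hi : i < j) : seriesApply ε w i = v i := by
        rw [seriesApply_congr fun i' hi' => hwu i' (by omega), (ih i hi).2]
      have hex := hε.exists_next_coeff h₀ hv hcyc hw hwv
      have huj : u j = hex.choose := by rw [hu j]; exact dif_pos hex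
      refine ⟨huj ▸ hex.choose_spec.1, ?_⟩
      have hsplit : seriesApply ε u j - seriesApply ε w j = ε 0 (u j) := by
        rw [← Pi.sub_apply, ← map_sub, seriesApply_apply_of_forall_lt fun i hi => by
          simp [hwu i hi]]
        simp [w]
      rw [← sub_add_cancel (seriesApply ε u j) (seriesApply ε w j), hsplit, huj,
        hex.choose_spec.2, sub_add_cancel]
  exact ⟨u, mem_seriesGrading.mpr fun j => (key j).1, funext fun j => (key j).2⟩

end Approximation

section Cone

variable {R M N : Type*} [Ring R] [AddCommGroup M] [Module R M] [AddCommGroup N] [Module R N]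

def coneOp (dM : M →ₗ[R] M) (f : M →ₗ[R] N) (dN : N →ₗ[R] N) : M × N →ₗ[R] M × N :=
  (-(dM ∘ₗ LinearMap.fst R M N)).prod (f ∘ₗ LinearMap.fst R M N + dN ∘ₗ LinearMap.snd R M N)

@[simp] lemma coneOp_apply (dM : M →ₗ[R] M) (f : M →ₗ[R] N) (dN : N →ₗ[R] N) (z : M × N) :
    coneOp dM f dN z = (-dM z.1, f z.1 + dN z.2) := rfl

def coneGrading (SM : ℤ → Submodule R M) (SN : ℤ → Submodule R N) (m k : ℤ) :
    Submodule R (M × N) :=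
  (SM (k + 1)).prod (SN (k + m))

variable {SM : ℤ → Submodule R M} {SN : ℤ → Submodule R N} {δ m : ℤ}

theorem IsQuasiIso.isAcyclic_coneOp {dM : M →ₗ[R] M} {f : M →ₗ[R] N} {dN : N →ₗ[R] N}
    (hq : IsQuasiIso SM SN m dM f dN) (hf : ∀ k, ∀ x ∈ SM k, f x ∈ SN (k + m))
    (hchain : ∀ k, ∀ x ∈ SM k, f (dM x) = dN (f x)) :
    IsAcyclic (coneGrading SM SN m) (coneOp dM f dN) := by
  rintro k ⟨x, y⟩ hz hcyc
  obtain ⟨hx, hy⟩ := Submodule.mem_prod.mp hz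
  simp only [coneOp_apply, Prod.mk_eq_zero, neg_eq_zero] at hcyc hx hy
  obtain ⟨hdx, hfxy⟩ := hcyc
  obtain ⟨x', hx', rfl⟩ := hq.injective (k + 1) x hx hdx (-y) (neg_mem hy)
    (by rw [map_neg, eq_neg_iff_add_eq_zero, hfxy])
  obtain ⟨x'', hx'', hdx'', y', hy', hxy'⟩ := hq.surjective k (y + f x')
    (add_mem hy (hf _ _ hx')) (by rw [map_add, ← hchain _ _ hx', add_comm, hfxy])
  refine ⟨(x'' - x', y'), Submodule.mem_prod.mpr ⟨sub_mem hx'' hx', hy'⟩, ?_⟩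
  simp only [coneOp_apply, map_sub, hdx'', zero_sub, neg_neg, Prod.mk.injEq, true_and]
  rw [sub_add_eq_add_sub, hxy', add_sub_cancel_right]

variable {dM : ℕ → M →ₗ[R] M} {f : ℕ → M →ₗ[R] N} {dN : ℕ → N →ₗ[R] N}

lemma seriesApply_coneOp (U : ℕ → M × N) :
    seriesApply (fun i => coneOp (dM i) (f i) (dN i)) U =
      fun j => (-seriesApply dM (Prod.fst ∘ U) j,
        seriesApply f (Prod.fst ∘ U) j + seriesApply dN (Prod.snd ∘ U) j) := by
  funext j
  ext <;> simp [seriesApply_apply, Prod.fst_sum, Prod.snd_sum, sum_add_distrib]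

lemma fst_comp_seriesApply_coneOp (U : ℕ → M × N) :
    Prod.fst ∘ seriesApply (fun i => coneOp (dM i) (f i) (dN i)) U =
      -seriesApply dM (Prod.fst ∘ U) := by
  rw [seriesApply_coneOp]; rfl

lemma snd_comp_seriesApply_coneOp (U : ℕ → M × N) :
    Prod.snd ∘ seriesApply (fun i => coneOp (dM i) (f i) (dN i)) U =
      seriesApply f (Prod.fst ∘ U) + seriesApply dN (Prod.snd ∘ U) := by
  rw [seriesApply_coneOp]; rfl

lemma mem_seriesGrading_coneGrading {k : ℤ} {U : ℕ → M × N} :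
    U ∈ seriesGrading (coneGrading SM SN m) δ k ↔
      Prod.fst ∘ U ∈ seriesGrading SM δ (k + 1) ∧ Prod.snd ∘ U ∈ seriesGrading SN δ (k + m) := by
  simp only [mem_seriesGrading, coneGrading, Submodule.mem_prod, forall_and, Function.comp_apply,
    add_right_comm _ (δ * _)]

theorem IsSeriesComplex.cone (hdM : IsSeriesComplex SM δ dM) (hdN : IsSeriesComplex SN δ dN)
    (hf : ∀ (i : ℕ) (k : ℤ), ∀ x ∈ SM k, f i x ∈ SN (k + m + δ * i))
    (hchain : ∀ k, ∀ u ∈ seriesGrading SM δ k,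
      seriesApply f (seriesApply dM u) = seriesApply dN (seriesApply f u)) :
    IsSeriesComplex (coneGrading SM SN m) δ fun i => coneOp (dM i) (f i) (dN i) where
  mapsTo i k z hz := by
    obtain ⟨hx, hy⟩ := Submodule.mem_prod.mp hz
    rw [coneOp_apply]
    refine Submodule.mem_prod.mpr ⟨neg_mem ?_, add_mem ?_ ?_⟩
    · convert hdM.mapsTo i _ _ hx using 2; ring
    · convert hf i _ _ hx using 2; ring
    · convert hdN.mapsTo i _ _ hy using 2; ring
  seriesApply_seriesApply k U hU := by
    obtain ⟨hU₁, hU₂⟩ := mem_seriesGrading_coneGrading.mp hU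
    rw [seriesApply_coneOp, fst_comp_seriesApply_coneOp, snd_comp_seriesApply_coneOp]
    funext j
    simp only [map_neg, map_add, hdM.seriesApply_seriesApply _ _ hU₁,
      hdN.seriesApply_seriesApply _ _ hU₂, hchain _ _ hU₁]
    ext <;> simp

lemma isQuasiIso_seriesApply_of_isAcyclic_cone
    (hcone : IsAcyclic (seriesGrading (coneGrading SM SN m) δ)
      (seriesApply fun i => coneOp (dM i) (f i) (dN i))) :
    IsQuasiIso (seriesGrading SM δ) (seriesGrading SN δ) m
      (seriesApply dM) (seriesApply f) (seriesApply dN) := by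
  constructor
  · intro k u hu hdu w hw hfu
    have hZ₁ : Prod.fst ∘ (fun j => (-u j, w j)) = -u := rfl
    have hZ₂ : Prod.snd ∘ (fun j => (-u j, w j)) = w := rfl
    obtain ⟨V, hV, hVZ⟩ := hcone (k - 1) (fun j => (-u j, w j))
      (by rw [sub_add_cancel, mem_seriesGrading_coneGrading, hZ₁, hZ₂]; exact ⟨neg_mem hu, hw⟩)
      (by rw [seriesApply_coneOp, hZ₁, hZ₂]; funext j; simp [hdu, hfu])
    refine ⟨Prod.fst ∘ V, by simpa using (mem_seriesGrading_coneGrading.mp hV).1, ?_⟩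
    have hV₁ := congrArg (Prod.fst ∘ ·) hVZ
    rw [fst_comp_seriesApply_coneOp, hZ₁] at hV₁
    exact neg_inj.mp hV₁
  · intro k w hw hdw
    have hZ₁ : Prod.fst ∘ (fun j => ((0 : M), w j)) = 0 := rfl
    have hZ₂ : Prod.snd ∘ (fun j => ((0 : M), w j)) = w := rfl
    obtain ⟨V, hV, hVZ⟩ := hcone k (fun j => (0, w j))
      (by
        rw [mem_seriesGrading_coneGrading, hZ₁, hZ₂, add_right_comm]
        exact ⟨zero_mem _, hw⟩)
      (by rw [seriesApply_coneOp, hZ₁, hZ₂]; funext j; simp [hdw])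
    obtain ⟨hV₁, hV₂⟩ := mem_seriesGrading_coneGrading.mp hV
    have hdV := congrArg (Prod.fst ∘ ·) hVZ
    have hfV := congrArg (Prod.snd ∘ ·) hVZ
    rw [fst_comp_seriesApply_coneOp, hZ₁, neg_eq_zero] at hdV
    rw [snd_comp_seriesApply_coneOp, hZ₂] at hfV
    exact ⟨_, hV₁, hdV, _, hV₂, hfV⟩

theorem IsSeriesComplex.isQuasiIso_seriesApply (hdM : IsSeriesComplex SM δ dM)
    (hdN : IsSeriesComplex SN δ dN) (hf : ∀ (i : ℕ) (k : ℤ), ∀ x ∈ SM k, f i x ∈ SN (k + m + δ * i))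
    (hchain : ∀ k, ∀ u ∈ seriesGrading SM δ k,
      seriesApply f (seriesApply dM u) = seriesApply dN (seriesApply f u))
    (h₀ : IsQuasiIso SM SN m (dM 0) (f 0) (dN 0)) :
    IsQuasiIso (seriesGrading SM δ) (seriesGrading SN δ) m
      (seriesApply dM) (seriesApply f) (seriesApply dN) := by
  have hchain₀ (k : ℤ) (x : M) (hx : x ∈ SM k) : f 0 (dM 0 x) = dN 0 (f 0 x) := by
    simpa [seriesApply_apply_zero] using
      congrFun (hchain k _ (single_zero_mem_seriesGrading hx)) 0
  refine isQuasiIso_seriesApply_of_isAcyclic_cone ((hdM.cone hdN hf hchain).isAcyclic ?_)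
  exact h₀.isAcyclic_coneOp (fun k x hx => by simpa using hf 0 k x hx) hchain₀

end Cone

section PiEmbedding

variable {n m : ℤ} {C D : ℤ → Type} [∀ k, AddCommGroup (C k)] [∀ k, Module ℚ (C k)]
  [∀ k, AddCommGroup (D k)] [∀ k, Module ℚ (D k)]

lemma single_degTr {k k' : ℤ} (h : k = k') (x : C k) :
    Pi.single k' (degTr C h x) = Pi.single k x := by
  subst h; rfl

lemma single_apply_of_eq {k k' : ℤ} (h : k = k') (x : C k) :
    Pi.single k x k' = degTr C h x := by
  subst h; exact Pi.single_eq_same k x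

variable (C) in
abbrev piPiece (k : ℤ) : Submodule ℚ (∀ k, C k) :=
  LinearMap.range (LinearMap.single ℚ C k)

lemma single_mem_piPiece {k k' : ℤ} (h : k = k') (x : C k) : Pi.single k x ∈ piPiece C k' :=
  ⟨degTr C h x, by rw [LinearMap.single_apply, single_degTr]⟩

def piExtend (F : ∀ (i : ℕ) (k : ℤ), C k →ₗ[ℚ] D (k + m + (n - 2) * i)) (i : ℕ) :
    (∀ k, C k) →ₗ[ℚ] ∀ k, D k :=
  LinearMap.pi fun k => degTr D (by ring) ∘ₗ F i (k - m - (n - 2) * i) ∘ₗ LinearMap.proj _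

lemma piExtend_single (F : ∀ (i : ℕ) (k : ℤ), C k →ₗ[ℚ] D (k + m + (n - 2) * i)) (i : ℕ)
    {k : ℤ} (x : C k) :
    piExtend F i (Pi.single k x) = Pi.single (k + m + (n - 2) * i) (F i k x) := by
  funext k'
  simp only [piExtend, LinearMap.pi_apply, LinearMap.coe_comp, Function.comp_apply,
    LinearMap.coe_proj, Function.eval]
  by_cases h : k' - m - (n - 2) * i = k
  · subst h
    rw [Pi.single_eq_same, single_apply_of_eq (by ring)]
  · rw [Pi.single_eq_of_ne h, map_zero, map_zero, Pi.single_eq_of_ne (by omega)]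

lemma piExtend_mem (F : ∀ (i : ℕ) (k : ℤ), C k →ₗ[ℚ] D (k + m + (n - 2) * i)) (i : ℕ) (k : ℤ) :
    ∀ x ∈ piPiece C k, piExtend F i x ∈ piPiece D (k + m + (n - 2) * i) := by
  rintro _ ⟨x, rfl⟩
  rw [LinearMap.single_apply, piExtend_single]
  exact ⟨_, LinearMap.single_apply _ _ _⟩

def seriesToPi {k : ℤ} : TildeC n C k →ₗ[ℚ] ℕ → ∀ k, C k where
  toFun v j := Pi.single (k + (n - 2) * j) (v j)
  map_add' v v' := funext fun j => Pi.single_add _ (v j) (v' j)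
  map_smul' c v := funext fun j => Pi.single_smul _ c (v j)

lemma seriesToPi_apply {k : ℤ} (v : TildeC n C k) (j : ℕ) :
    seriesToPi v j = Pi.single (k + (n - 2) * j) (v j) := rfl

lemma seriesToPi_injective {k : ℤ} : Function.Injective (seriesToPi : TildeC n C k →ₗ[ℚ] _) :=
  fun _ _ h => funext fun j => Pi.single_injective _ (congrFun h j)

lemma seriesToPi_mem {k k' : ℤ} (h : k = k') (v : TildeC n C k) :
    seriesToPi v ∈ seriesGrading (piPiece C) (n - 2) k' := by
  subst h
  exact mem_seriesGrading.mpr fun j => ⟨v j, LinearMap.single_apply _ _ _⟩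

lemma exists_seriesToPi_eq {k k' : ℤ} (h : k' = k) {u : ℕ → ∀ k, C k}
    (hu : u ∈ seriesGrading (piPiece C) (n - 2) k') : ∃ v : TildeC n C k, seriesToPi v = u := by
  subst h
  choose v hv using mem_seriesGrading.mp hu
  exact ⟨v, funext fun j => by rw [← hv j, LinearMap.single_apply]; rfl⟩

lemma seriesToPi_tildeTr {k k' : ℤ} (h : k = k') (v : TildeC n C k) :
    seriesToPi (tildeTr n C h v) = seriesToPi v := by
  subst h; rfl

lemma seriesToPi_seriesMapDeg (F : ∀ (i : ℕ) (k : ℤ), C k →ₗ[ℚ] D (k + m + (n - 2) * i))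
    {k : ℤ} (v : TildeC n C k) :
    seriesToPi (seriesMapDeg n m C D F k v) = seriesApply (piExtend F) (seriesToPi v) := by
  funext j
  rw [seriesApply_apply, ← sum_attach, seriesToPi_apply, seriesMapDeg,
    ← LinearMap.single_apply ℚ, map_sum]
  refine sum_congr rfl fun p _ => ?_
  rw [LinearMap.single_apply, single_degTr, seriesToPi_apply, piExtend_single]

lemma seriesToPi_seriesD (d : ∀ (i : ℕ) (k : ℤ), C k →ₗ[ℚ] C (k + 1 + (n - 2) * i))
    {k : ℤ} (v : TildeC n C k) :
    seriesToPi (seriesD n C d k v) = seriesApply (piExtend d) (seriesToPi v) :=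
  seriesToPi_seriesMapDeg d v

end PiEmbedding

section HSeries

variable {n m : ℤ} {C D : ℤ → Type} [∀ k, AddCommGroup (C k)] [∀ k, Module ℚ (C k)]
  [∀ k, AddCommGroup (D k)] [∀ k, Module ℚ (D k)]
  {d : ∀ (i : ℕ) (k : ℤ), C k →ₗ[ℚ] C (k + 1 + (n - 2) * i)}
  {del : ∀ (i : ℕ) (k : ℤ), D k →ₗ[ℚ] D (k + 1 + (n - 2) * i)}
  {F : ∀ (i : ℕ) (k : ℤ), C k →ₗ[ℚ] D (k + m + (n - 2) * i)}

lemma convRel.sum_piExtend_piExtend_single (hd : convRel n C d) (i : ℕ) {k : ℤ} (x : C k) :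
    ∑ q ∈ antidiagonal i, piExtend d q.1 (piExtend d q.2 (Pi.single k x)) = 0 := by
  have h := congrArg (LinearMap.single ℚ C (k + 2 + (n - 2) * i)) (hd i k x)
  rw [map_zero, map_sum] at h
  rw [← sum_attach, ← h]
  refine sum_congr rfl fun q _ => ?_
  rw [LinearMap.single_apply, single_degTr, piExtend_single, piExtend_single]

lemma convRel.isSeriesComplex (hd : convRel n C d) :
    IsSeriesComplex (piPiece C) (n - 2) (piExtend d) where
  mapsTo := piExtend_mem d
  seriesApply_seriesApply k u hu := by
    funext j
    rw [seriesApply_seriesApply]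
    refine sum_eq_zero fun p _ => ?_
    obtain ⟨x, hx⟩ := mem_seriesGrading.mp hu p.2
    rw [← hx, LinearMap.single_apply, hd.sum_piExtend_piExtend_single]

lemma seriesApply_piExtend_comm
    (hF : ∀ (k : ℤ) (v : TildeC n C k),
      seriesMapDeg n m C D F (k + 1) (seriesD n C d k v) =
        tildeTr n D (by ring) (seriesD n D del (k + m) (seriesMapDeg n m C D F k v)))
    (k : ℤ) {u : ℕ → ∀ k, C k} (hu : u ∈ seriesGrading (piPiece C) (n - 2) k) :
    seriesApply (piExtend F) (seriesApply (piExtend d) u) =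
      seriesApply (piExtend del) (seriesApply (piExtend F) u) := by
  obtain ⟨v, rfl⟩ := exists_seriesToPi_eq rfl hu
  rw [← seriesToPi_seriesD, ← seriesToPi_seriesMapDeg, hF, seriesToPi_tildeTr,
    seriesToPi_seriesD, seriesToPi_seriesMapDeg]

lemma isQuasiIso_piExtend_zero
    (hF0inj : ∀ (k : ℤ) (x : C k), d 0 k x = 0 →
      (∃ y : D (k + m - 1),
        (degTr D (by push_cast; ring) (del 0 (k + m - 1) y) : D (k + m)) =
          degTr D (by push_cast; ring) (F 0 k x)) →
      ∃ z : C (k - 1), degTr C (by push_cast; ring) (d 0 (k - 1) z) = x)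
    (hF0surj : ∀ (k : ℤ) (y : D (k + m)), del 0 (k + m) y = 0 →
      ∃ x : C k, d 0 k x = 0 ∧
        ∃ z : D (k + m - 1),
          (degTr D (by push_cast; ring) (F 0 k x) : D (k + m)) +
            degTr D (by push_cast; ring) (del 0 (k + m - 1) z) = y) :
    IsQuasiIso (piPiece C) (piPiece D) m (piExtend d 0) (piExtend F 0) (piExtend del 0) where
  injective k := by
    rintro _ ⟨x, rfl⟩ hdx _ ⟨y, rfl⟩ hxy
    rw [LinearMap.single_apply, piExtend_single, Pi.single_eq_zero_iff] at hdx
    rw [LinearMap.single_apply, LinearMap.single_apply, piExtend_single, piExtend_single] at hxy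
    obtain ⟨z, hz⟩ := hF0inj (k + 1) x hdx ⟨degTr D (by ring) y, Pi.single_injective _ <| by
      rw [single_degTr, single_degTr, ← piExtend_single, single_degTr, piExtend_single, hxy]⟩
    refine ⟨Pi.single (k + 1 - 1) z, single_mem_piPiece (by ring) z, ?_⟩
    rw [piExtend_single, LinearMap.single_apply, ← hz, single_degTr]
  surjective k := by
    rintro _ ⟨y, rfl⟩ hdy
    rw [LinearMap.single_apply, piExtend_single, Pi.single_eq_zero_iff] at hdy
    obtain ⟨x, hdx, z, hxz⟩ := hF0surj (k + 1) y hdy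
    refine ⟨Pi.single (k + 1) x, ⟨x, LinearMap.single_apply _ _ _⟩, ?_,
      Pi.single (k + 1 + m - 1) z, single_mem_piPiece (by ring) z, ?_⟩
    · rw [piExtend_single, hdx, Pi.single_zero]
    · rw [piExtend_single, piExtend_single, LinearMap.single_apply, ← hxz, Pi.single_add,
        single_degTr, single_degTr]

end HSeries

/-- Quasi-isomorphisms of ħ-series complexes: if `F = ∑ F_i ħ^i` is a degree-`m`
ħ-series chain map whose leading term `F₀ : (C, d₀) → (D, ∂₀)` is a
quasi-isomorphism, then `F` induces an isomorphism
`H^k(̃C, d) → H^{k+m}(̃D, ∂)` in every degree `k`. -/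
theorem seriesMap_quasiIso_of_F0_quasiIso (n m : ℤ) (C D : ℤ → Type)
    [∀ k, AddCommGroup (C k)] [∀ k, Module ℚ (C k)]
    [∀ k, AddCommGroup (D k)] [∀ k, Module ℚ (D k)]
    (d : ∀ (i : ℕ) (k : ℤ), C k →ₗ[ℚ] C (k + 1 + (n - 2) * i))
    (del : ∀ (i : ℕ) (k : ℤ), D k →ₗ[ℚ] D (k + 1 + (n - 2) * i))
    (hd : convRel n C d) (hdel : convRel n D del)
    (F : ∀ (i : ℕ) (k : ℤ), C k →ₗ[ℚ] D (k + m + (n - 2) * i))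
    -- F is a chain map: F ∘ d = ∂ ∘ F
    (hF : ∀ (k : ℤ) (v : TildeC n C k),
      seriesMapDeg n m C D F (k + 1) (seriesD n C d k v) =
        tildeTr n D (by ring) (seriesD n D del (k + m) (seriesMapDeg n m C D F k v)))
    -- F₀ induces an injective map on cohomology in every degree
    (hF0inj : ∀ (k : ℤ) (x : C k), d 0 k x = 0 →
      (∃ y : D (k + m - 1),
        (degTr D (by push_cast; ring) (del 0 (k + m - 1) y) : D (k + m)) =
          degTr D (by push_cast; ring) (F 0 k x)) →
      ∃ z : C (k - 1), degTr C (by push_cast; ring) (d 0 (k - 1) z) = x)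
    -- F₀ induces a surjective map on cohomology in every degree
    (hF0surj : ∀ (k : ℤ) (y : D (k + m)), del 0 (k + m) y = 0 →
      ∃ x : C k, d 0 k x = 0 ∧
        ∃ z : D (k + m - 1),
          (degTr D (by push_cast; ring) (F 0 k x) : D (k + m)) +
            degTr D (by push_cast; ring) (del 0 (k + m - 1) z) = y) :
    -- F induces an injective map on cohomology in every degree
    (∀ (k : ℤ) (v : TildeC n C k), seriesD n C d k v = 0 →
      (∃ w : TildeC n D (k + m - 1),
        tildeTr n D (by ring) (seriesD n D del (k + m - 1) w) =
          seriesMapDeg n m C D F k v) →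
      ∃ u : TildeC n C (k - 1),
        tildeTr n C (by ring) (seriesD n C d (k - 1) u) = v) ∧
    -- F induces a surjective map on cohomology in every degree
    (∀ (k : ℤ) (w : TildeC n D (k + m)), seriesD n D del (k + m) w = 0 →
      ∃ v : TildeC n C k, seriesD n C d k v = 0 ∧
        ∃ u : TildeC n D (k + m - 1),
          seriesMapDeg n m C D F k v +
            tildeTr n D (by ring) (seriesD n D del (k + m - 1) u) = w) := by
  have hq := hd.isSeriesComplex.isQuasiIso_seriesApply hdel.isSeriesComplex (piExtend_mem F)
    (seriesApply_piExtend_comm hF) (isQuasiIso_piExtend_zero hF0inj hF0surj)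
  refine ⟨fun k v hv ⟨w, hw⟩ => ?_, fun k w hw => ?_⟩
  · obtain ⟨u, hu, hdu⟩ := hq.injective (k - 1) (seriesToPi v) (seriesToPi_mem (by ring) v)
      (by rw [← seriesToPi_seriesD, hv, map_zero]) (seriesToPi w) (seriesToPi_mem (by ring) w)
      (by rw [← seriesToPi_seriesMapDeg, ← hw, seriesToPi_tildeTr, seriesToPi_seriesD])
    obtain ⟨u, rfl⟩ := exists_seriesToPi_eq rfl hu
    exact ⟨u, seriesToPi_injective (by rw [seriesToPi_tildeTr, seriesToPi_seriesD, hdu])⟩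
  · obtain ⟨v, hv, hdv, u, hu, hvu⟩ := hq.surjective (k - 1) (seriesToPi w)
      (seriesToPi_mem (by ring) w) (by rw [← seriesToPi_seriesD, hw, map_zero])
    obtain ⟨v, rfl⟩ := exists_seriesToPi_eq (sub_add_cancel k 1) hv
    obtain ⟨u, rfl⟩ := exists_seriesToPi_eq (sub_add_eq_add_sub k 1 m) hu
    refine ⟨v, seriesToPi_injective ?_, u, seriesToPi_injective ?_⟩
    · rw [seriesToPi_seriesD, hdv, map_zero]
    · rw [map_add, seriesToPi_seriesMapDeg, seriesToPi_tildeTr, seriesToPi_seriesD, hvu]
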